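/- Let t ≥ 2 and let m_1, m_2, …, m_t be positive integers with m_1 = max{m_1,…,m_t}. Then for every i with 2 ≤ i ≤ t, every edge joining two distinct vertices of the part V_i is good for K_{m_1,…,m_t}. -/

import Mathlib

/-! Both `K = K_{m_1,…,m_t}` and `K + e` have rank number `n - m_1 + 1`, where `n = ∑ m_j`.
Since `e` joins two vertices of another part, `V_1` is independent in `K + e`; labelling it
by `1` and the other `n - m_1` vertices injectively gives a ranking of `K + e`, hence of `K`.
Conversely, a ranking of `K` is injective, or two vertices `x, y` of some part `V_j` share a
label, in which case it is injective on `{x} ∪ (V \ V_j)`, a set of `n - m_j + 1 ≥ n - m_1 + 1`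
vertices. -/

open SimpleGraph

/-- `f` is a `k`-ranking of `G`: labels lie in `{1,…,k}` and whenever two distinct
vertices get the same label, every path connecting them contains a vertex of
strictly larger label. -/
def IsRanking {V : Type*} (G : SimpleGraph V) (k : ℕ) (f : V → ℕ) : Prop :=
  (∀ v, 1 ≤ f v ∧ f v ≤ k) ∧
  ∀ u v, u ≠ v → f u = f v → ∀ p : G.Walk u v, p.IsPath → ∃ w ∈ p.support, f u < f w

/-- The rank number `χᵣ(G)`: the least `k` such that `G` admits a `k`-ranking. -/
noncomputable def rankNumber {V : Type*} (G : SimpleGraph V) : ℕ :=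
  sInf {k | ∃ f : V → ℕ, IsRanking G k f}

/-- An edge `e ∉ E(G)` is good for `G` if adding it does not change the rank number. -/
def goodEdge {V : Type*} (G : SimpleGraph V) (e : Sym2 V) : Prop :=
  rankNumber (G ⊔ SimpleGraph.fromEdgeSet {e}) = rankNumber G

open Finset

namespace IsRanking

variable {V : Type*} {G H : SimpleGraph V} {k : ℕ} {f : V → ℕ}

theorem mono (hGH : G ≤ H) (hf : IsRanking H k f) : IsRanking G k f := by
  refine ⟨hf.1, fun u v huv he p hp => ?_⟩
  obtain ⟨w, hw, hlt⟩ := hf.2 u v huv he (p.mapLe hGH) (hp.mapLe hGH)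
  exact ⟨w, by simpa [Walk.mapLe, Walk.support_map] using hw, hlt⟩

theorem ne_of_adj (hf : IsRanking G k f) {u v : V} (h : G.Adj u v) : f u ≠ f v := by
  intro he
  obtain ⟨w, hw, hlt⟩ := hf.2 u v h.ne he (Walk.cons h Walk.nil) (by simp [h.ne])
  simp only [Walk.support_cons, Walk.support_nil, List.mem_cons,
    List.not_mem_nil, or_false] at hw
  rcases hw with rfl | rfl <;> omega

theorem lt_of_adj_of_adj (hf : IsRanking G k f) {u v w : V} (huv : u ≠ v) (he : f u = f v)
    (huw : G.Adj u w) (hwv : G.Adj w v) : f u < f w := by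
  obtain ⟨x, hx, hlt⟩ := hf.2 u v huv he (Walk.cons huw (Walk.cons hwv Walk.nil))
    (by simp [huw.ne, hwv.ne, huv])
  simp only [Walk.support_cons, Walk.support_nil, List.mem_cons,
    List.not_mem_nil, or_false] at hx
  rcases hx with rfl | rfl | rfl <;> omega

theorem card_le_of_injOn (hf : IsRanking G k f) {s : Finset V} (hs : Set.InjOn f s) :
    #s ≤ k := by
  simpa using card_le_card_of_injOn f (fun v _ => mem_Icc.2 (hf.1 v)) hs

end IsRanking

section Ranking

variable {V : Type*} {G : SimpleGraph V}

theorem rankNumber_eq_of_isRanking {k : ℕ} {f : V → ℕ} (hf : IsRanking G k f)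
    (hmin : ∀ k' f', IsRanking G k' f' → k ≤ k') : rankNumber G = k :=
  le_antisymm (Nat.sInf_le ⟨f, hf⟩)
    (le_csInf ⟨k, f, hf⟩ fun _ ⟨f', hf'⟩ => hmin _ f' hf')

/-- Label `s` by `1` and the other vertices injectively above it: two vertices of `s` are
separated by the second vertex of any path joining them. -/
theorem exists_isRanking_of_isIndepSet [Fintype V] (s : Finset V) (hs : G.IsIndepSet s) :
    ∃ f, IsRanking G (Fintype.card V - #s + 1) f := by
  classical
  let e : {v // v ∉ s} ≃ Fin (Fintype.card V - #s) :=
    Fintype.equivFinOfCardEq (by simp [Fintype.card_subtype_compl])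
  refine ⟨fun v => if hv : v ∈ s then 1 else e ⟨v, hv⟩ + 2, fun v => ?_,
    fun u v huv he p hp => ?_⟩
  · by_cases hv : v ∈ s
    · simp [hv]
    · have := (e ⟨v, hv⟩).isLt
      simp only [hv, dite_false]
      omega
  · by_cases hu : u ∈ s <;> by_cases hv : v ∈ s
    · cases p with
      | nil => exact absurd rfl huv
      | cons h q =>
        rename_i w
        have hw : w ∉ s := fun hw => hs hu hw h.ne h
        exact ⟨w, by simp, by simp [hu, hw]⟩
    · simp [hu, hv] at he
    · simp [hu, hv] at he
    · simp only [hu, hv, dite_false, add_left_inj, Fin.val_inj] at he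
      exact absurd (congrArg Subtype.val (e.injective he)) huv

theorem SimpleGraph.IsIndepSet.sup_fromEdgeSet_singleton {s : Set V} {e : Sym2 V}
    (hs : G.IsIndepSet s) (he : ∃ v ∈ e, v ∉ s) : (G ⊔ fromEdgeSet {e}).IsIndepSet s := by
  intro u hu v hv huv hadj
  rcases (sup_adj _ _ _ _).1 hadj with h | h
  · exact hs hu hv huv h
  · obtain ⟨x, hx, hxs⟩ := he
    rw [fromEdgeSet_adj, Set.mem_singleton_iff] at h
    rw [← h.1, Sym2.mem_iff] at hx
    rcases hx with rfl | rfl <;> contradiction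

end Ranking

section CompleteMultipartite

variable {ι : Type*} {V : ι → Type*}

theorem isIndepSet_completeMultipartiteGraph_fiber (j : ι) :
    (completeMultipartiteGraph V).IsIndepSet {v | v.1 = j} := by
  intro u hu v hv _ h
  exact h (hu.trans hv.symm)

theorem card_filter_fst_eq [Fintype ι] [DecidableEq ι] [∀ i, Fintype (V i)] (j : ι) :
    #(univ.filter fun v : Σ i, V i => v.1 = j) = Fintype.card (V j) := by
  rw [← Fintype.card_subtype, Fintype.card_congr (Equiv.sigmaSubtype j)]

/-- If two vertices `x, y` of one part share a label, no vertex `u` of another part can share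
its label with a vertex `v` of its own part: the paths `u x v` and `x u y` would force both
`f u < f x` and `f x < f u`. -/
theorem IsRanking.injOn_insert_of_eq {k : ℕ} {f : (Σ i, V i) → ℕ}
    (hf : IsRanking (completeMultipartiteGraph V) k f) {x y : Σ i, V i} (hxy : x ≠ y)
    (hpart : x.1 = y.1) (he : f x = f y) : Set.InjOn f (insert x {v | v.1 ≠ x.1}) := by
  rintro u hu v hv huv
  by_contra hne
  by_cases hsame : u.1 = v.1
  · rcases hu with rfl | hu <;> rcases hv with rfl | hv
    · exact hne rfl
    · exact hv hsame.symm
    · exact hu hsame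
    · have hux : u.1 ≠ x.1 := hu
      have hvx : x.1 ≠ v.1 := fun h => hv h.symm
      have huy : u.1 ≠ y.1 := hpart ▸ hux
      have h1 := hf.lt_of_adj_of_adj hne huv hux hvx
      have h2 := hf.lt_of_adj_of_adj hxy he hux.symm huy
      omega
  · exact hf.ne_of_adj hsame huv

theorem IsRanking.card_sub_card_lt [Fintype ι] [∀ i, Fintype (V i)] {k : ℕ}
    {f : (Σ i, V i) → ℕ} (hf : IsRanking (completeMultipartiteGraph V) k f) {j : ι}
    [Nonempty (V j)] (hj : ∀ i, Fintype.card (V i) ≤ Fintype.card (V j)) :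
    Fintype.card (Σ i, V i) - Fintype.card (V j) < k := by
  have hjn : Fintype.card (V j) ≤ Fintype.card (Σ i, V i) :=
    Fintype.card_le_of_injective _ sigma_mk_injective
  classical
  by_cases hrep : ∃ x y : Σ i, V i, x ≠ y ∧ x.1 = y.1 ∧ f x = f y
  · obtain ⟨x, y, hxy, hpart, he⟩ := hrep
    set s := insert x (univ.filter fun v : Σ i, V i => v.1 ≠ x.1)
    have hs : #s ≤ k :=
      hf.card_le_of_injOn (by simpa [s] using hf.injOn_insert_of_eq hxy hpart he)
    have hcard : #s + Fintype.card (V x.1) = Fintype.card (Σ i, V i) + 1 := by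
      have hsplit :=
        card_filter_add_card_filter_not (s := univ) (p := fun v : Σ i, V i => v.1 = x.1)
      rw [card_insert_of_notMem (by simp), ← card_filter_fst_eq x.1, ← card_univ, ← hsplit]
      simp only [ne_eq]
      omega
    have hx := hj x.1
    omega
  · push Not at hrep
    have hinj : Set.InjOn f (univ : Finset (Σ i, V i)) := by
      intro u _ v _ he
      by_contra hne
      by_cases hsame : u.1 = v.1
      · exact hrep u v hne hsame he
      · exact hf.ne_of_adj hsame he
    have huniv := hf.card_le_of_injOn hinj
    rw [card_univ] at huniv
    have hj0 := Fintype.card_pos (α := V j)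
    omega

end CompleteMultipartite

theorem multipartite_other_part_edge_good_general (t : ℕ) (m : Fin t → ℕ)
    (i₁ : Fin t) (hmax : ∀ i, m i ≤ m i₁)
    (i : Fin t) (hi : i ≠ i₁) (a b : Fin (m i)) :
    goodEdge (SimpleGraph.completeMultipartiteGraph fun j => Fin (m j))
      s(⟨i, a⟩, ⟨i, b⟩) := by
  classical
  set G := completeMultipartiteGraph fun j => Fin (m j)
  have hindep : (G ⊔ fromEdgeSet {s(⟨i, a⟩, ⟨i, b⟩)}).IsIndepSet
      ↑(univ.filter fun v : Σ j, Fin (m j) => v.1 = i₁) := by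
    rw [coe_filter_univ]
    exact (isIndepSet_completeMultipartiteGraph_fiber i₁).sup_fromEdgeSet_singleton
      ⟨⟨i, a⟩, Sym2.mem_mk_left _ _, hi⟩
  obtain ⟨f, hf⟩ := exists_isRanking_of_isIndepSet _ hindep
  rw [card_filter_fst_eq, Fintype.card_fin] at hf
  have : Nonempty (Fin (m i₁)) := Fin.pos_iff_nonempty.1 ((Fin.pos a).trans_le (hmax i))
  have hlower : ∀ k f', IsRanking G k f' → Fintype.card (Σ j, Fin (m j)) - m i₁ + 1 ≤ k :=
    fun k f' hf' => by simpa using hf'.card_sub_card_lt (j := i₁) (by simpa using hmax)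
  rw [goodEdge, rankNumber_eq_of_isRanking hf fun k f' hf' => hlower k f' (hf'.mono le_sup_left),
    rankNumber_eq_of_isRanking (hf.mono le_sup_left) hlower]

/-- in the complete multipartite graph with parts `Vᵢ = Fin (m i)` of
sizes `m i ≥ 1` (at least two parts), if the part indexed `i₁` has maximum size, then
for every other part, every edge joining two distinct vertices of that part is good. -/
theorem multipartite_other_part_edge_good (t : ℕ) (ht : 2 ≤ t) (m : Fin t → ℕ)
    (hm : ∀ i, 1 ≤ m i) (i₁ : Fin t) (hmax : ∀ i, m i ≤ m i₁)
    (i : Fin t) (hi : i ≠ i₁) (a b : Fin (m i)) (hab : a ≠ b) :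
    goodEdge (SimpleGraph.completeMultipartiteGraph fun j => Fin (m j))
      s(⟨i, a⟩, ⟨i, b⟩) :=
  multipartite_other_part_edge_good_general t m i₁ hmax i hi a b
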